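/- Let M > 1, let ε ∈ (0,1), let A be an n×n real symmetric positive definite matrix with condition number ‖A‖·‖A^{−1}‖ ≤ M, and let b ∈ ℝ^n with ‖b‖ = 1. If the integer k satisfies k ≥ ln((1 + √(1−ε²))/ε) / ln((√M + 1)/(√M − 1)), then there exists x in the Krylov subspace span{b, Ab, …, A^{k−1} b} with ‖A x − b‖ ≤ ε. That is, for the class F₁ of symmetric positive definite matrices with condition number at most M, the minimal residual algorithm computes an ε-approximation within ⌈ln((1+(1−ε²)^{1/2})/ε) / ln((M^{1/2}+1)/(M^{1/2}−1))⌉ Krylov steps. -/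

import Mathlib

/-!
For `x` in the `k`-th Krylov space the residual `A x - b` is `-q(A) b` for a polynomial `q` of
degree at most `k` with `q(0) = 1`, and for symmetric `A` its norm is at most `‖b‖` times the
maximum of `|q|` over the eigenvalues. These lie in `[a, M a]` with `a = ‖A⁻¹‖⁻¹`, where the
rescaled Chebyshev polynomial `q(x) = T_k((M + 1 - 2x/a)/(M - 1)) / T_k((M + 1)/(M - 1))` is
bounded by `1 / T_k((M + 1)/(M - 1))`. Since `(M + 1)/(M - 1) = cosh θ` with
`θ = log((√M + 1)/(√M - 1))`, `T_k(cosh θ) = cosh (k θ)` and `1/ε = cosh (log((1 + √(1 - ε²))/ε))`,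
the bound on `k` makes this at most `ε`.
-/

/-- The Euclidean norm on `ℝ^n`. -/
noncomputable def euclNorm {n : ℕ} (v : Fin n → ℝ) : ℝ := Real.sqrt (∑ i, v i ^ 2)

/-- The spectral norm of an `n × n` real matrix: the operator norm induced by the
Euclidean norm. -/
noncomputable def specNorm {n : ℕ} (A : Matrix (Fin n) (Fin n) ℝ) : ℝ :=
  ‖LinearMap.toContinuousLinearMap (Matrix.toEuclideanLin A)‖

open Polynomial Real Set Matrix WithLp

namespace Real

theorem cosh_log_sqrt_add_one_div_sqrt_sub_one {M : ℝ} (hM : 1 < M) :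
    cosh (log ((√M + 1) / (√M - 1))) = (M + 1) / (M - 1) := by
  have hsM : 1 < √M := by simpa using Real.sqrt_lt_sqrt zero_le_one hM
  have hsM2 : √M ^ 2 = M := Real.sq_sqrt (by linarith)
  rw [cosh_log (div_pos (by linarith) (by linarith)), inv_div]
  have h1 : √M - 1 ≠ 0 := by linarith
  have h2 : M - 1 ≠ 0 := by linarith
  field_simp
  nlinarith

theorem cosh_log_one_add_sqrt_one_sub_sq_div {ε : ℝ} (hε₀ : 0 < ε) (hε₁ : ε ≤ 1) :
    cosh (log ((1 + √(1 - ε ^ 2)) / ε)) = ε⁻¹ := by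
  have hs : √(1 - ε ^ 2) ^ 2 = 1 - ε ^ 2 := Real.sq_sqrt (by nlinarith)
  have hs0 : 0 ≤ √(1 - ε ^ 2) := Real.sqrt_nonneg _
  rw [cosh_log (div_pos (by linarith) hε₀), inv_div]
  field_simp
  nlinarith

end Real

section Chebyshev

open Chebyshev

theorem one_le_mul_eval_T {M ε : ℝ} (hM : 1 < M) (hε₀ : 0 < ε) (hε₁ : ε ≤ 1) {k : ℕ}
    (hk : log ((1 + √(1 - ε ^ 2)) / ε) / log ((√M + 1) / (√M - 1)) ≤ k) :
    1 ≤ ε * (T ℝ k).eval ((M + 1) / (M - 1)) := by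
  have hsM : 1 < √M := by simpa using Real.sqrt_lt_sqrt zero_le_one hM
  have hθ : 0 < log ((√M + 1) / (√M - 1)) :=
    log_pos ((one_lt_div (by linarith)).2 (by linarith))
  have ht : 0 ≤ log ((1 + √(1 - ε ^ 2)) / ε) :=
    log_nonneg ((one_le_div hε₀).2 (by linarith [Real.sqrt_nonneg (1 - ε ^ 2)]))
  rw [div_le_iff₀ hθ] at hk
  rw [← cosh_log_sqrt_add_one_div_sqrt_sub_one hM, T_real_cosh, ← div_le_iff₀' hε₀, one_div,
    ← cosh_log_one_add_sqrt_one_sub_sq_div hε₀ hε₁, cosh_le_cosh, abs_of_nonneg ht,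
    abs_of_nonneg (by positivity)]
  exact_mod_cast hk

theorem exists_eval_zero_eq_one_abs_eval_le {M ε a : ℝ} (hM : 1 < M) (ha : 0 < a) (hε₀ : 0 < ε)
    (hε₁ : ε ≤ 1) {k : ℕ}
    (hk : log ((1 + √(1 - ε ^ 2)) / ε) / log ((√M + 1) / (√M - 1)) ≤ k) :
    ∃ q : ℝ[X], q.eval 0 = 1 ∧ q.natDegree ≤ k ∧ ∀ x ∈ Icc a (M * a), |q.eval x| ≤ ε := by
  set y₀ := (M + 1) / (M - 1)
  set τ := (T ℝ k).eval y₀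
  have hτ : 1 ≤ ε * τ := one_le_mul_eval_T hM hε₀ hε₁ hk
  have hτ₀ : 0 < τ := pos_of_mul_pos_right (one_pos.trans_le hτ) hε₀.le
  -- the affine map `x ↦ y₀ - c x` sends `0` to `y₀` and `[a, M a]` onto `[-1, 1]`
  set c := 2 / ((M - 1) * a)
  refine ⟨C τ⁻¹ * (T ℝ k).comp (C (-c) * X + C y₀), ?_, ?_, ?_⟩
  · simp [τ, hτ₀.ne']
  · calc _ ≤ (T ℝ k).natDegree * (C (-c) * X + C y₀).natDegree := by
          rw [← natDegree_comp]; exact natDegree_C_mul_le _ _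
      _ ≤ k * 1 := by
          gcongr
          · simp [natDegree_T]
          · exact natDegree_linear_le
      _ = k := mul_one k
  · rintro x ⟨hax, hxM⟩
    have hM₁ : 0 < M - 1 := by linarith
    have hx : |-c * x + y₀| ≤ 1 := by
      have h₁ : 1 ≤ x / a := (le_div_iff₀ ha).2 (by linarith)
      have h₂ : x / a ≤ M := (div_le_iff₀ ha).2 hxM
      have : -c * x + y₀ = (M + 1 - 2 * (x / a)) / (M - 1) := by
        simp only [c, y₀]; field_simp; ring
      rw [this, abs_div, abs_of_pos hM₁, div_le_one hM₁, abs_le]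
      constructor <;> linarith
    simp only [eval_mul, eval_C, eval_comp, eval_add, eval_X, abs_mul, abs_inv, abs_of_pos hτ₀]
    calc τ⁻¹ * |(T ℝ k).eval (-c * x + y₀)| ≤ τ⁻¹ * 1 := by
          gcongr; exact abs_eval_T_real_le_one _ hx
      _ ≤ ε := by rw [mul_one, inv_le_iff_one_le_mul₀ hτ₀]; linarith

end Chebyshev

namespace OrthonormalBasis

variable {ι E : Type*} [Fintype ι] [NormedAddCommGroup E] [InnerProductSpace ℝ E] [CompleteSpace E]
  {T : E →L[ℝ] E} (hT : IsSelfAdjoint T) (e : OrthonormalBasis ι ℝ E) {μ : ι → ℝ}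
  (he : ∀ i, T (e i) = μ i • e i)
include hT he

theorem repr_apply_of_isSelfAdjoint (v : E) (i : ι) : e.repr (T v) i = μ i * e.repr v i := by
  rw [e.repr_apply_apply, e.repr_apply_apply, ← ContinuousLinearMap.coe_coe T,
    ← hT.isSymmetric, ContinuousLinearMap.coe_coe, he, real_inner_smul_left]

theorem repr_aeval_apply_of_isSelfAdjoint (q : ℝ[X]) (v : E) (i : ι) :
    e.repr (aeval T q v) i = q.eval (μ i) * e.repr v i := by
  induction q using Polynomial.induction_on generalizing v with
  | C a => simp [Algebra.algebraMap_eq_smul_one]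
  | add p q hp hq => simp [hp, hq, add_mul]
  | monomial n a ih =>
    rw [pow_succ, ← mul_assoc, map_mul, aeval_X, mul_apply_eq_comp, ih,
      e.repr_apply_of_isSelfAdjoint hT he, eval_mul_X]
    ring

theorem norm_aeval_apply_le_of_isSelfAdjoint {q : ℝ[X]} {ε : ℝ} (hε : 0 ≤ ε)
    (hq : ∀ i, |q.eval (μ i)| ≤ ε) (v : E) : ‖aeval T q v‖ ≤ ε * ‖v‖ := by
  rw [← e.repr.norm_map, ← e.repr.norm_map v, EuclideanSpace.norm_eq, EuclideanSpace.norm_eq,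
    ← abs_of_nonneg hε, ← Real.sqrt_sq_eq_abs, ← Real.sqrt_mul (sq_nonneg _), Finset.mul_sum]
  gcongr with i
  rw [e.repr_aeval_apply_of_isSelfAdjoint hT he, norm_mul, mul_pow, Real.norm_eq_abs]
  gcongr
  exact hq i

end OrthonormalBasis

namespace Matrix

section Krylov

variable {ι R : Type*} [Fintype ι] [DecidableEq ι] [CommRing R]

theorem aeval_mulVec_mem_span_pow_mulVec (A : Matrix ι ι R) (b : ι → R) {p : R[X]} {k : ℕ}
    (hp : p.degree < k) :
    aeval A p *ᵥ b ∈ Submodule.span R (range fun i : Fin k => (A ^ (i : ℕ)) *ᵥ b) := by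
  rcases eq_or_ne p 0 with rfl | hp₀
  · simp
  rw [aeval_eq_sum_range' ((natDegree_lt_iff_degree_lt hp₀).2 hp), sum_mulVec]
  refine Submodule.sum_mem _ fun i hi => ?_
  rw [smul_mulVec]
  exact Submodule.smul_mem _ _ (Submodule.subset_span ⟨⟨i, Finset.mem_range.1 hi⟩, rfl⟩)

theorem exists_mem_span_pow_mulVec_mulVec_sub_eq (A : Matrix ι ι R) (b : ι → R) {q : R[X]}
    {k : ℕ} (hq₀ : q.eval 0 = 1) (hqk : q.natDegree ≤ k) :
    ∃ x ∈ Submodule.span R (range fun i : Fin k => (A ^ (i : ℕ)) *ᵥ b),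
      A *ᵥ x - b = -(aeval A q *ᵥ b) := by
  nontriviality R
  have hq : q ≠ 0 := fun h => by simp [h] at hq₀
  refine ⟨-(aeval A q.divX *ᵥ b), Submodule.neg_mem _ (aeval_mulVec_mem_span_pow_mulVec A b ?_), ?_⟩
  · exact (degree_divX_lt hq).trans_le ((degree_le_natDegree).trans (by exact_mod_cast hqk))
  · have h : aeval A q = A * aeval A q.divX + 1 := by
      conv_lhs => rw [← X_mul_divX_add q, coeff_zero_eq_eval_zero, hq₀]
      simp
    rw [h, add_mulVec, one_mulVec, mulVec_neg, mulVec_mulVec]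
    abel

end Krylov

section Spectrum

variable {ι : Type*} [Fintype ι] [DecidableEq ι] {A : Matrix ι ι ℝ}

theorem IsHermitian.toEuclideanCLM_eigenvectorBasis (hA : A.IsHermitian) (j : ι) :
    toEuclideanCLM (𝕜 := ℝ) A (hA.eigenvectorBasis j) = hA.eigenvalues j • hA.eigenvectorBasis j :=
  WithLp.ofLp_injective 2 (by simp [hA.mulVec_eigenvectorBasis])

theorem IsHermitian.abs_eigenvalues_le (hA : A.IsHermitian) (j : ι) :
    |hA.eigenvalues j| ≤ ‖toEuclideanCLM (𝕜 := ℝ) A‖ := by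
  simpa [hA.toEuclideanCLM_eigenvectorBasis, norm_smul, hA.eigenvectorBasis.orthonormal.1 j]
    using (toEuclideanCLM (𝕜 := ℝ) A).le_opNorm (hA.eigenvectorBasis j)

theorem IsHermitian.one_le_norm_inv_mul_abs_eigenvalues (hA : A.IsHermitian) (hA' : IsUnit A)
    (j : ι) : 1 ≤ ‖toEuclideanCLM (𝕜 := ℝ) A⁻¹‖ * |hA.eigenvalues j| := by
  set v := hA.eigenvectorBasis j
  have hv : toEuclideanCLM (𝕜 := ℝ) A⁻¹ (toEuclideanCLM (𝕜 := ℝ) A v) = v := by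
    rw [← mul_apply_eq_comp, ← map_mul, nonsing_inv_mul A ((isUnit_iff_isUnit_det A).1 hA'),
      map_one, one_apply_eq_self]
  have h := (toEuclideanCLM (𝕜 := ℝ) A⁻¹).le_opNorm (toEuclideanCLM (𝕜 := ℝ) A v)
  rwa [hv, hA.eigenvectorBasis.orthonormal.1 j, hA.toEuclideanCLM_eigenvectorBasis, norm_smul,
    hA.eigenvectorBasis.orthonormal.1 j, mul_one, Real.norm_eq_abs] at h

theorem PosDef.exists_eigenvalues_mem_Icc [Nonempty ι] (hA : A.PosDef) {M : ℝ}
    (hcond : ‖toEuclideanCLM (𝕜 := ℝ) A‖ * ‖toEuclideanCLM (𝕜 := ℝ) A⁻¹‖ ≤ M) :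
    ∃ a, 0 < a ∧ ∀ j, hA.1.eigenvalues j ∈ Icc a (M * a) := by
  have hlower j := hA.1.one_le_norm_inv_mul_abs_eigenvalues hA.isUnit j
  have hupper j := hA.1.abs_eigenvalues_le j
  simp only [abs_of_pos (hA.eigenvalues_pos _)] at hlower hupper
  have hinv : 0 < ‖toEuclideanCLM (𝕜 := ℝ) A⁻¹‖ :=
    pos_of_mul_pos_left (one_pos.trans_le (hlower (Classical.arbitrary ι))) (hA.eigenvalues_pos _).le
  refine ⟨‖toEuclideanCLM (𝕜 := ℝ) A⁻¹‖⁻¹, inv_pos.2 hinv, fun j => ⟨?_, ?_⟩⟩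
  · rw [inv_le_iff_one_le_mul₀' hinv]; exact hlower j
  · rw [← div_eq_mul_inv, le_div_iff₀ hinv]
    exact (mul_le_mul_of_nonneg_right (hupper j) hinv.le).trans hcond

theorem IsHermitian.norm_toLp_aeval_mulVec_le (hA : A.IsHermitian) {q : ℝ[X]} {ε : ℝ} (hε : 0 ≤ ε)
    (hq : ∀ j, |q.eval (hA.eigenvalues j)| ≤ ε) (v : ι → ℝ) :
    ‖toLp 2 (aeval A q *ᵥ v)‖ ≤ ε * ‖toLp 2 v‖ := by
  have h := hA.eigenvectorBasis.norm_aeval_apply_le_of_isSelfAdjoint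
    (IsSelfAdjoint.map hA toEuclideanCLM) hA.toEuclideanCLM_eigenvectorBasis hε hq (toLp 2 v)
  rwa [aeval_algHom_apply, toEuclideanCLM_toLp] at h

end Spectrum

end Matrix

theorem euclNorm_eq_norm_toLp {n : ℕ} (v : Fin n → ℝ) : euclNorm v = ‖toLp 2 v‖ := by
  simp [euclNorm, EuclideanSpace.norm_eq]

/-- **Step count of the minimal residual algorithm on the class `F₁`.**
Let `A` be symmetric positive definite with condition number `‖A‖·‖A⁻¹‖ ≤ M` and let
`‖b‖ = 1`.  If `k ≥ ln((1+√(1−ε²))/ε) / ln((√M+1)/(√M−1))` then the Krylov subspace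
`span{b, Ab, …, A^{k−1}b}` contains a vector `x` with residual `‖Ax − b‖ ≤ ε`. -/
theorem stmt_12 (n : ℕ) (M ε : ℝ) (hM : 1 < M) (hε : ε ∈ Set.Ioo (0 : ℝ) 1)
    (A : Matrix (Fin n) (Fin n) ℝ) (hA : A.PosDef)
    (hcond : specNorm A * specNorm A⁻¹ ≤ M)
    (b : Fin n → ℝ) (hb : euclNorm b = 1) (k : ℕ)
    (hk : Real.log ((1 + Real.sqrt (1 - ε ^ 2)) / ε) /
        Real.log ((Real.sqrt M + 1) / (Real.sqrt M - 1)) ≤ (k : ℝ)) :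
    ∃ x ∈ Submodule.span ℝ (Set.range fun i : Fin k => (A ^ (i : ℕ)).mulVec b),
      euclNorm (A.mulVec x - b) ≤ ε := by
  obtain ⟨hε₀, hε₁⟩ := hε
  have : Nonempty (Fin n) := ⟨⟨0, Nat.pos_of_ne_zero fun h => by subst h; simp [euclNorm] at hb⟩⟩
  obtain ⟨a, ha, hspec⟩ := hA.exists_eigenvalues_mem_Icc hcond
  obtain ⟨q, hq₀, hqk, hqε⟩ := exists_eval_zero_eq_one_abs_eval_le hM ha hε₀ hε₁.le hk
  obtain ⟨x, hx, hres⟩ := A.exists_mem_span_pow_mulVec_mulVec_sub_eq b hq₀ hqk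
  refine ⟨x, hx, ?_⟩
  calc euclNorm (A *ᵥ x - b) = ‖toLp 2 (aeval A q *ᵥ b)‖ := by
        rw [hres, euclNorm_eq_norm_toLp, WithLp.toLp_neg, norm_neg]
    _ ≤ ε * ‖toLp 2 b‖ := hA.1.norm_toLp_aeval_mulVec_le hε₀.le (fun j => hqε _ (hspec j)) b
    _ = ε := by rw [← euclNorm_eq_norm_toLp, hb, mul_one]
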